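/- arXiv:1702.06203 — 2 statements merged into one kernel-verified Lean document; each statement's English description precedes it below -/
import Mathlib

section
/- Let G be a k-edge-connected graph and S a nonempty subset of V(G). Then ω(G \ S) ≤ Σ_{v∈S} d_G(v)/k − (2/k)·e_G(S), where ω(G \ S) is the number of components of the graph obtained by deleting the vertices of S, and e_G(S) is the number of edges of G with both endpoints in S. -/
open SimpleGraph

variable {V : Type*}

/-- Number of connected components. -/
noncomputable def numComponents (G : SimpleGraph V) : ℕ :=
  Nat.card G.ConnectedComponent

/-- Degree of a vertex. -/
noncomputable def deg (G : SimpleGraph V) (v : V) : ℕ := (G.neighborSet v).ncard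

/-- Number of edges of `G` with both ends in `S`. -/
noncomputable def edgesIn (G : SimpleGraph V) (S : Set V) : ℕ :=
  {e ∈ G.edgeSet | ∀ v ∈ e, v ∈ S}.ncard

/-- `G \ [S, F]`: remove all edges incident to `S` except edges of `F`. -/
def delExcept (G F : SimpleGraph V) (S : Set V) : SimpleGraph V where
  Adj x y := G.Adj x y ∧ (F.Adj x y ∨ (x ∉ S ∧ y ∉ S))
  symm := ⟨by
    rintro x y ⟨h1, h2⟩
    exact ⟨h1.symm, h2.elim (fun hf => Or.inl hf.symm) (fun hc => Or.inr ⟨hc.2, hc.1⟩)⟩⟩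
  loopless := ⟨fun x h => G.loopless.irrefl x h.1⟩

/-- `m`-tree-connected: contains `m` pairwise edge-disjoint spanning trees. -/
def IsTreeConnected (m : ℕ) (G : SimpleGraph V) : Prop :=
  ∃ T : Fin m → SimpleGraph V,
    (∀ i, T i ≤ G) ∧ (∀ i, (T i).Connected ∧ (T i).IsAcyclic) ∧
    ∀ i j, i ≠ j → Disjoint (T i).edgeSet (T j).edgeSet

/-- Two vertices lie in a common `m`-tree-connected induced subgraph, i.e. in the same
`m`-tree-connected component. -/
def sameTC (m : ℕ) (G : SimpleGraph V) (u v : V) : Prop :=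
  ∃ W : Set V, u ∈ W ∧ v ∈ W ∧ IsTreeConnected m (G.induce W)

/-- Tree-connectivity measure `Ω_m`. -/
noncomputable def Omega (m : ℕ) (G : SimpleGraph V) : ℝ :=
  (Nat.card (Quot (sameTC m G)) : ℝ) -
    ({e ∈ G.edgeSet | ∃ x y, e = s(x, y) ∧ ¬ sameTC m G x y}.ncard : ℝ) / m

/-- `k`-edge-connected. -/
def EdgeConnected (k : ℕ) (G : SimpleGraph V) : Prop :=
  ∀ E' : Set (Sym2 V), E'.ncard < k → (G.deleteEdges E').Connected

/-- Contraction of a vertex set to a single vertex. -/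
noncomputable def vrep (X : Set V) (v : V) : Option {v : V // v ∉ X} :=
  @dite _ (v ∈ X) (Classical.dec _) (fun _ => none) (fun h => some ⟨v, h⟩)

noncomputable def contract (G : SimpleGraph V) (X : Set V) :
    SimpleGraph (Option {v : V // v ∉ X}) where
  Adj a b := a ≠ b ∧ ∃ x y, G.Adj x y ∧ vrep X x = a ∧ vrep X y = b
  symm := ⟨by
    rintro a b ⟨hne, x, y, h, hx, hy⟩
    exact ⟨hne.symm, y, x, h.symm, hy, hx⟩⟩
  loopless := ⟨fun a h => h.1 rfl⟩

/-- Contraction of every component of `F`. -/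
def contractComponents (G F : SimpleGraph V) : SimpleGraph F.ConnectedComponent where
  Adj a b := a ≠ b ∧ ∃ x y, G.Adj x y ∧ F.connectedComponentMk x = a ∧ F.connectedComponentMk y = b
  symm := ⟨by
    rintro a b ⟨hne, x, y, h, hx, hy⟩
    exact ⟨hne.symm, y, x, h.symm, hy, hx⟩⟩
  loopless := ⟨fun a h => h.1 rfl⟩

/-- Number of edges of `G` incident to `v` joining different components of `F`. -/
noncomputable def degSep (G F : SimpleGraph V) (v : V) : ℕ :=
  {w | G.Adj v w ∧ ¬ F.Reachable v w}.ncard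

/-- Number of edges of `G` with both ends in `S` joining different components of `F`. -/
noncomputable def edgesInSep (G F : SimpleGraph V) (S : Set V) : ℕ :=
  {e : Sym2 V | ∃ x y, e = s(x, y) ∧ G.Adj x y ∧ x ∈ S ∧ y ∈ S ∧ ¬ F.Reachable x y}.ncard

/-- `K_{1,n}`-free. -/
def K1nFree (n : ℕ) (G : SimpleGraph V) : Prop :=
  ¬ ∃ (c : V) (A : Finset V), A.card = n ∧ (∀ a ∈ A, G.Adj c a) ∧
      ∀ a ∈ A, ∀ b ∈ A, a ≠ b → ¬ G.Adj a b

/-- A spanning closed walk meeting each vertex `v` at most `f v` times. -/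
def HasClosedSpanningWalk [DecidableEq V] (G : SimpleGraph V) (f : V → ℕ) : Prop :=
  ∃ (u : V) (w : G.Walk u u), (∀ v, v ∈ w.support) ∧ ∀ v, w.support.tail.count v ≤ f v

private lemma reach_mem {V : Type*} {H : SimpleGraph V} {A : Set V}
    (hA : ∀ x y, x ∈ A → H.Adj x y → y ∈ A) :
    ∀ {x y}, H.Reachable x y → x ∈ A → y ∈ A := by
  intro x y h
  obtain ⟨p⟩ := h
  induction p with
  | nil => exact id
  | cons hadj p ih => exact fun hx => ih (hA _ _ hx hadj)

/-- If `G` is `k`-edge-connected and `S ≠ ∅`, then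
`ω(G \ S) ≤ Σ_{v∈S} d_G(v)/k − (2/k)·e_G(S)`. -/
theorem stmt_3 {V : Type*} [Fintype V] (G : SimpleGraph V) (k : ℕ) (hk : 0 < k)
    (hG : EdgeConnected k G) (S : Finset V) (hS : S.Nonempty) :
    (numComponents (G.induce (↑S)ᶜ) : ℝ) ≤
      ∑ v ∈ S, (deg G v : ℝ) / k - (2 / (k : ℝ)) * edgesIn G (↑S) := by
  classical
  set T : Set V := (↑S)ᶜ with hT
  set IG := G.induce T with hIG
  haveI : Fintype IG.ConnectedComponent := Fintype.ofFinite _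
  -- vertex set of each component, as a subset of V
  set W : IG.ConnectedComponent → Set V :=
    fun c => {v | ∃ h : v ∈ T, IG.connectedComponentMk ⟨v, h⟩ = c} with hW
  have hWT : ∀ c, W c ⊆ T := fun c v hv => hv.1
  have hWdisj : ∀ c c', ∀ v, v ∈ W c → v ∈ W c' → c = c' := by
    rintro c c' v ⟨h1, e1⟩ ⟨h2, e2⟩
    rw [← e1, ← e2]
  -- closure of W c under adjacency within T
  have hWadj : ∀ c x y, x ∈ W c → G.Adj x y → y ∈ T → y ∈ W c := by
    rintro c x y ⟨hxT, hx⟩ hadj hyT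
    refine ⟨hyT, ?_⟩
    rw [← hx]
    apply SimpleGraph.ConnectedComponent.sound
    exact (SimpleGraph.Adj.reachable (by exact hadj.symm : IG.Adj ⟨y, hyT⟩ ⟨x, hxT⟩))
  -- cut edges of a component (all go to S)
  set cut : IG.ConnectedComponent → Finset (Sym2 V) := fun c =>
    Finset.univ.filter (fun e => ∃ x y, e = s(x, y) ∧ G.Adj x y ∧ x ∈ W c ∧ y ∈ S) with hcut
  set cross : Finset (Sym2 V) :=
    Finset.univ.filter (fun e => ∃ x y, e = s(x, y) ∧ G.Adj x y ∧ x ∉ (↑S : Set V) ∧ y ∈ S)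
    with hcross
  set inE : Finset (Sym2 V) :=
    Finset.univ.filter (fun e => ∃ x y, e = s(x, y) ∧ G.Adj x y ∧ x ∈ S ∧ y ∈ S) with hinE
  -- each cut has at least k edges
  have hcutk : ∀ c, k ≤ (cut c).card := by
    intro c
    induction c using SimpleGraph.ConnectedComponent.ind with
    | _ x0T =>
    set c := IG.connectedComponentMk x0T with hc
    by_contra hlt
    push_neg at hlt
    have hconn := hG (↑(cut c)) (by rwa [Set.ncard_coe_finset])
    have hx0 : (x0T : V) ∈ W c := ⟨x0T.2, rfl⟩
    obtain ⟨s0, hs0⟩ := hS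
    have hs0T : s0 ∉ T := by simp [hT, hs0]
    have hclosed : ∀ x y, x ∈ W c → (G.deleteEdges ↑(cut c)).Adj x y → y ∈ W c := by
      intro x y hx hadj
      rw [SimpleGraph.deleteEdges_adj] at hadj
      obtain ⟨hadj, hne⟩ := hadj
      by_cases hyS : y ∈ S
      · exact absurd (Finset.mem_coe.mpr (Finset.mem_filter.mpr
          ⟨Finset.mem_univ _, ⟨x, y, rfl, hadj, hx, hyS⟩⟩)) hne
      · exact hWadj c x y hx hadj (by simp [hT, hyS])
    have := reach_mem hclosed (hconn.preconnected (x0T : V) s0) hx0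
    exact hs0T (hWT c this)
  -- cuts of distinct components are disjoint
  have hdisj : ∀ c, c ∈ (Finset.univ : Finset IG.ConnectedComponent) → ∀ c',
      c' ∈ Finset.univ → c ≠ c' → Disjoint (cut c) (cut c') := by
    intro c _ c' _ hne
    rw [Finset.disjoint_left]
    intro e he he'
    simp only [hcut, Finset.mem_filter, Finset.mem_univ, true_and] at he he'
    obtain ⟨x, y, rfl, -, hx, hy⟩ := he
    obtain ⟨x', y', hexy, -, hx', hy'⟩ := he'
    rw [Sym2.eq_iff] at hexy
    rcases hexy with ⟨h1, h2⟩ | ⟨h1, h2⟩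
    · subst h1
      exact hne (hWdisj c c' x hx hx')
    · exact (hWT c' hx') (Finset.mem_coe.mpr (h2 ▸ hy))
  -- cuts are cross edges
  have hsub : ∀ c, cut c ⊆ cross := by
    intro c e he
    simp only [hcut, Finset.mem_filter, Finset.mem_univ, true_and] at he
    obtain ⟨x, y, rfl, hadj, hx, hy⟩ := he
    simp only [hcross, Finset.mem_filter, Finset.mem_univ, true_and]
    exact ⟨x, y, rfl, hadj, hWT c hx, hy⟩
  -- k * numComponents ≤ cross.card
  have step1 : k * numComponents (G.induce (↑S)ᶜ) ≤ cross.card := by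
    have h1 : numComponents (G.induce (↑S)ᶜ) = Fintype.card IG.ConnectedComponent := by
      rw [numComponents, Nat.card_eq_fintype_card]
    rw [h1]
    calc k * Fintype.card IG.ConnectedComponent
        = ∑ _c : IG.ConnectedComponent, k := by
          rw [Finset.sum_const, Finset.card_univ, smul_eq_mul, mul_comm]
      _ ≤ ∑ c : IG.ConnectedComponent, (cut c).card := Finset.sum_le_sum fun c _ => hcutk c
      _ = (Finset.univ.biUnion cut).card := (Finset.card_biUnion hdisj).symm
      _ ≤ cross.card := Finset.card_le_card (by
          intro e he
          rw [Finset.mem_biUnion] at he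
          obtain ⟨c, -, he⟩ := he
          exact hsub c he)
  -- edgesIn = inE.card
  have hEin : edgesIn G (↑S) = inE.card := by
    rw [edgesIn, ← Set.ncard_coe_finset inE]
    congr 1
    ext e
    induction e using Sym2.inductionOn with
    | hf x y =>
      simp only [Set.mem_setOf_eq, hinE, Finset.coe_filter, Finset.mem_univ, true_and,
        SimpleGraph.mem_edgeSet]
      constructor
      · rintro ⟨hadj, hall⟩
        exact ⟨x, y, rfl, hadj, hall x (Sym2.mem_mk_left x y), hall y (Sym2.mem_mk_right x y)⟩
      · rintro ⟨x', y', hexy, hadj, hx', hy'⟩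
        rw [Sym2.eq_iff] at hexy
        rcases hexy with ⟨rfl, rfl⟩ | ⟨rfl, rfl⟩
        · exact ⟨hadj, fun v hv => by rcases Sym2.mem_iff.mp hv with rfl | rfl <;> assumption⟩
        · exact ⟨hadj.symm, fun v hv => by rcases Sym2.mem_iff.mp hv with rfl | rfl <;> assumption⟩
  -- degree counting
  have hdeg : ∀ v, deg G v = (Finset.univ.filter (fun w => G.Adj v w)).card := by
    intro v
    rw [deg, Set.ncard_eq_toFinset_card']
    congr 1
    ext w
    simp [SimpleGraph.neighborSet]
    exact Set.mem_toFinset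
  have step2 : cross.card + 2 * inE.card ≤ ∑ v ∈ S, deg G v := by
    have hsplit : ∀ v, deg G v =
        (Finset.univ.filter (fun w => G.Adj v w ∧ w ∈ S)).card +
        (Finset.univ.filter (fun w => G.Adj v w ∧ w ∉ S)).card := by
      intro v
      rw [hdeg v,
        ← Finset.card_filter_add_card_filter_not
          (s := Finset.univ.filter (fun w => G.Adj v w)) (p := fun w => w ∈ S),
        Finset.filter_filter, Finset.filter_filter]
    calc cross.card + 2 * inE.card
        ≤ (S.sigma fun v => Finset.univ.filter (fun w => G.Adj v w ∧ w ∉ S)).card +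
          (S.sigma fun v => Finset.univ.filter (fun w => G.Adj v w ∧ w ∈ S)).card := by
          gcongr
          · -- cross.card ≤ sigma card
            rw [Finset.card_eq_sum_card_fiberwise
              (f := fun p : Σ _ : V, V => s(p.1, p.2)) (t := cross) (by
                rintro ⟨v, w⟩ hp
                simp only [Finset.mem_coe, Finset.mem_sigma, Finset.mem_filter, Finset.mem_univ, true_and] at hp
                obtain ⟨hv, hadj, hw⟩ := hp
                exact Finset.mem_filter.mpr
                  ⟨Finset.mem_univ _, ⟨w, v, Sym2.eq_swap, hadj.symm, hw, hv⟩⟩)]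
            calc cross.card = ∑ _e ∈ cross, 1 := by simp
              _ ≤ _ := by
                  apply Finset.sum_le_sum
                  intro e he
                  rw [Nat.one_le_iff_ne_zero, ← Nat.pos_iff_ne_zero, Finset.card_pos]
                  simp only [hcross, Finset.mem_filter, Finset.mem_univ, true_and] at he
                  obtain ⟨x, y, rfl, hadj, hx, hy⟩ := he
                  refine ⟨⟨y, x⟩, Finset.mem_filter.mpr ⟨Finset.mem_sigma.mpr
                    ⟨hy, Finset.mem_filter.mpr ⟨Finset.mem_univ _, hadj.symm, hx⟩⟩, Sym2.eq_swap⟩⟩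
          · -- 2 * inE.card ≤ sigma card
            rw [Finset.card_eq_sum_card_fiberwise
              (f := fun p : Σ _ : V, V => s(p.1, p.2)) (t := inE) (by
                rintro ⟨v, w⟩ hp
                simp only [Finset.mem_coe, Finset.mem_sigma, Finset.mem_filter, Finset.mem_univ, true_and] at hp
                obtain ⟨hv, hadj, hw⟩ := hp
                exact Finset.mem_filter.mpr ⟨Finset.mem_univ _, ⟨v, w, rfl, hadj, hv, hw⟩⟩)]
            calc 2 * inE.card = ∑ _e ∈ inE, 2 := by
                  rw [Finset.sum_const, smul_eq_mul, mul_comm]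
              _ ≤ _ := by
                  apply Finset.sum_le_sum
                  intro e he
                  simp only [hinE, Finset.mem_filter, Finset.mem_univ, true_and] at he
                  obtain ⟨x, y, rfl, hadj, hx, hy⟩ := he
                  have h2 : ({⟨x, y⟩, ⟨y, x⟩} : Finset (Σ _ : V, V)) ⊆
                      (S.sigma fun v => Finset.univ.filter
                        (fun w => G.Adj v w ∧ w ∈ S)).filter (fun p => s(p.1, p.2) = s(x, y)) := by
                    intro p hp
                    rcases Finset.mem_insert.mp hp with rfl | hp
                    · exact Finset.mem_filter.mpr ⟨Finset.mem_sigma.mpr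
                        ⟨hx, Finset.mem_filter.mpr ⟨Finset.mem_univ _, hadj, hy⟩⟩, rfl⟩
                    · rw [Finset.mem_singleton] at hp
                      subst hp
                      exact Finset.mem_filter.mpr ⟨Finset.mem_sigma.mpr
                        ⟨hy, Finset.mem_filter.mpr ⟨Finset.mem_univ _, hadj.symm, hx⟩⟩, Sym2.eq_swap⟩
                  calc 2 = ({⟨x, y⟩, ⟨y, x⟩} : Finset (Σ _ : V, V)).card := by
                        rw [Finset.card_insert_of_notMem (by
                          simp only [Finset.mem_singleton]
                          intro h
                          exact hadj.ne (congrArg Sigma.fst h)), Finset.card_singleton]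
                    _ ≤ _ := Finset.card_le_card h2
      _ = ∑ v ∈ S, deg G v := by
          rw [Finset.card_sigma, Finset.card_sigma, ← Finset.sum_add_distrib]
          exact Finset.sum_congr rfl fun v _ => by rw [hsplit v]; ring
  -- conclude over ℝ
  have hnat : k * numComponents (G.induce (↑S)ᶜ) + 2 * edgesIn G (↑S) ≤ ∑ v ∈ S, deg G v := by
    rw [hEin]; omega
  have hkR : (0 : ℝ) < k := by exact_mod_cast hk
  have key : (numComponents (G.induce (↑S)ᶜ) : ℝ) ≤
      (((∑ v ∈ S, deg G v : ℕ) : ℝ) - 2 * (edgesIn G (↑S) : ℝ)) / k := by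
    rw [le_div_iff₀ hkR]
    have : ((k * numComponents (G.induce (↑S)ᶜ) + 2 * edgesIn G (↑S) : ℕ) : ℝ)
        ≤ ((∑ v ∈ S, deg G v : ℕ) : ℝ) := by exact_mod_cast hnat
    push_cast at this ⊢
    linarith
  refine key.trans (le_of_eq ?_)
  push_cast
  rw [sub_div, Finset.sum_div]
  congr 1
  ring
end

section
/- Every connected K_{1,n}-free simple graph with n ≥ 3 satisfies ω(G \ S) ≤ (n−2)|S| + 1 for all S ⊆ V(G), where ω counts connected components after deleting the vertex set S. -/
open SimpleGraph

variable {V : Type*}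

section Aux

variable {W : Type*}

/-- A walk staying inside `s` gives reachability in the induced subgraph. -/
lemma reach_induce_aux {H : SimpleGraph W} {s : Set W} {x y : W} (w : H.Walk x y)
    (hw : ∀ v ∈ w.support, v ∈ s) (hx : x ∈ s) (hy : y ∈ s) :
    (H.induce s).Reachable ⟨x, hx⟩ ⟨y, hy⟩ := by
  induction w with
  | nil => rfl
  | @cons u b v h p ih =>
    have hb : b ∈ s := hw b (by simp [SimpleGraph.Walk.support_cons])
    have hadj : (H.induce s).Adj ⟨u, hx⟩ ⟨b, hb⟩ := h
    exact hadj.reachable.trans (ih (fun v hv => hw v (by simp [SimpleGraph.Walk.support_cons, hv])) hb hy)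

lemma exists_nbr {H : SimpleGraph W} {a x : W} (w : H.Walk x a) (hx : x ∈ ({a}ᶜ : Set W)) :
    ∃ y, ∃ hy : y ∈ ({a}ᶜ : Set W), H.Adj y a ∧
      (H.induce {a}ᶜ).Reachable ⟨x, hx⟩ ⟨y, hy⟩ := by
  induction w with
  | nil => exact absurd rfl hx
  | @cons u b v h p ih =>
    by_cases hb : b = v
    · subst hb
      exact ⟨u, hx, h, Reachable.refl _⟩
    · obtain ⟨y, hy, hadj, hr⟩ := ih hb
      have hadj' : (H.induce ({v}ᶜ : Set W)).Adj ⟨u, hx⟩ ⟨b, hb⟩ := h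
      exact ⟨y, hy, hadj, hadj'.reachable.trans hr⟩

lemma K1nFree.induce {n : ℕ} {G : SimpleGraph W} (h : K1nFree n G) (s : Set W) :
    K1nFree n (G.induce s) := by
  classical
  rintro ⟨c, A, hcard, hadj, hnon⟩
  refine h ⟨c.val, A.image Subtype.val, ?_, ?_, ?_⟩
  · rw [Finset.card_image_of_injective _ Subtype.val_injective, hcard]
  · rintro a ha
    obtain ⟨a', ha', rfl⟩ := Finset.mem_image.mp ha
    exact hadj a' ha'
  · rintro a ha b hb hab hGab
    obtain ⟨a', ha', rfl⟩ := Finset.mem_image.mp ha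
    obtain ⟨b', hb', rfl⟩ := Finset.mem_image.mp hb
    exact hnon a' ha' b' hb' (fun h => hab (by rw [h])) hGab

lemma key_step [Finite W] {n : ℕ} (hn : 3 ≤ n) (H : SimpleGraph W)
    (hfree : K1nFree n H) (a : W) :
    numComponents (H.induce {a}ᶜ) ≤ numComponents H + (n - 2) := by
  classical
  haveI : Fintype W := Fintype.ofFinite W
  set α := (H.induce ({a}ᶜ : Set W)).ConnectedComponent
  set β := H.ConnectedComponent
  haveI : Fintype α := Fintype.ofFinite _
  haveI : Fintype β := Fintype.ofFinite _
  let ι : H.induce ({a}ᶜ : Set W) →g H := ⟨Subtype.val, fun h => h⟩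
  let f : α → β := ConnectedComponent.map ι
  set B : β := H.connectedComponentMk a with hB
  -- every component in the fiber over B contains a neighbor of a
  have claim1 : ∀ D : α, f D = B → ∃ y, ∃ hy : y ∈ ({a}ᶜ : Set W), H.Adj y a ∧
      (H.induce ({a}ᶜ : Set W)).connectedComponentMk ⟨y, hy⟩ = D := by
    intro D hD
    obtain ⟨x, rfl⟩ := D.exists_rep
    have : H.connectedComponentMk x.val = B := hD
    have hreach : H.Reachable x.val a := ConnectedComponent.exact this
    obtain ⟨w⟩ := hreach
    obtain ⟨y, hy, hadj, hr⟩ := exists_nbr w x.2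
    exact ⟨y, hy, hadj, ConnectedComponent.sound hr.symm⟩
  -- injectivity away from the fiber over B
  have claim2 : ∀ D₁ D₂ : α, f D₁ = f D₂ → f D₁ ≠ B → D₁ = D₂ := by
    intro D₁ D₂ h12 hne
    obtain ⟨x, rfl⟩ := D₁.exists_rep
    obtain ⟨y, rfl⟩ := D₂.exists_rep
    have : H.connectedComponentMk x.val = H.connectedComponentMk y.val := h12
    obtain ⟨w⟩ := ConnectedComponent.exact this
    have hsup : ∀ v ∈ w.support, v ∈ ({a}ᶜ : Set W) := by
      intro v hv hva
      apply hne
      have : H.Reachable x.val v := ⟨w.takeUntil v hv⟩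
      have hxB : H.connectedComponentMk x.val = B := by
        rw [hB]
        exact ConnectedComponent.sound (hva ▸ this)
      exact hxB
    have hr := reach_induce_aux w hsup x.2 y.2
    exact ConnectedComponent.sound hr
  -- fiber over B has size at most n - 1
  have fibB : (Finset.univ.filter (fun D : α => f D = B)).card ≤ n - 1 := by
    by_contra hcon
    push_neg at hcon
    have hge : n ≤ (Finset.univ.filter (fun D : α => f D = B)).card := by omega
    obtain ⟨t, hts, htc⟩ := Finset.exists_subset_card_eq hge
    -- choose a neighbor for each component in t
    have hch : ∀ D ∈ t, ∃ y, ∃ hy : y ∈ ({a}ᶜ : Set W), H.Adj y a ∧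
        (H.induce ({a}ᶜ : Set W)).connectedComponentMk ⟨y, hy⟩ = D := by
      intro D hD
      exact claim1 D (Finset.mem_filter.mp (hts hD)).2
    haveI : Inhabited W := ⟨a⟩
    choose! nb hnb1 hnb2 hnb3 using hch
    refine hfree ⟨a, t.image nb, ?_, ?_, ?_⟩
    · rw [Finset.card_image_of_injOn, htc]
      intro D₁ h1 D₂ h2 heq
      rw [← hnb3 D₁ h1, ← hnb3 D₂ h2]
      congr 1
      exact Subtype.ext heq
    · rintro y hy
      obtain ⟨D, hD, rfl⟩ := Finset.mem_image.mp hy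
      exact (hnb2 D hD).symm
    · rintro y hy z hz hyz hadj
      obtain ⟨D₁, h1, rfl⟩ := Finset.mem_image.mp hy
      obtain ⟨D₂, h2, rfl⟩ := Finset.mem_image.mp hz
      have hadj' : (H.induce ({a}ᶜ : Set W)).Adj ⟨nb D₁, hnb1 D₁ h1⟩ ⟨nb D₂, hnb1 D₂ h2⟩ := hadj
      apply hyz
      have : D₁ = D₂ := by
        rw [← hnb3 D₁ h1, ← hnb3 D₂ h2]
        exact ConnectedComponent.sound hadj'.reachable
      rw [this]
  -- counting
  have hsplit := Finset.card_filter_add_card_filter_not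
    (s := (Finset.univ : Finset α)) (p := fun D => f D = B)
  have hoff : (Finset.univ.filter (fun D : α => ¬ f D = B)).card ≤ Fintype.card β - 1 := by
    have : (Finset.univ.filter (fun D : α => ¬ f D = B)).card ≤ (Finset.univ.erase B).card := by
      apply Finset.card_le_card_of_injOn f
      · intro D hD
        simp only [Finset.mem_coe, Finset.mem_filter] at hD
        exact Finset.mem_erase.mpr ⟨hD.2, Finset.mem_univ _⟩
      · intro D₁ h1 D₂ h2 heq
        simp only [Finset.coe_filter, Set.mem_setOf_eq] at h1 h2
        exact claim2 D₁ D₂ heq h1.2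
    rwa [Finset.card_erase_of_mem (Finset.mem_univ _), Finset.card_univ] at this
  rw [Finset.card_univ] at hsplit
  have hβpos : 1 ≤ Fintype.card β := Fintype.card_pos_iff.mpr ⟨B⟩
  have hcards : numComponents (H.induce ({a}ᶜ : Set W)) = Fintype.card α :=
    Nat.card_eq_fintype_card
  have hcards' : numComponents H = Fintype.card β := Nat.card_eq_fintype_card
  omega

lemma numComponents_congr {α β : Type*} {G : SimpleGraph α} {H : SimpleGraph β} (e : G ≃g H) :
    numComponents G = numComponents H := Nat.card_congr e.connectedComponentEquiv

lemma numComponents_of_connected {G : SimpleGraph W} (h : G.Connected) :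
    numComponents G = 1 := by
  haveI : Nonempty W := h.nonempty
  haveI : Nonempty G.ConnectedComponent := ⟨G.connectedComponentMk (Classical.arbitrary W)⟩
  haveI : Subsingleton G.ConnectedComponent := ⟨fun C D => by
    obtain ⟨x, rfl⟩ := C.exists_rep
    obtain ⟨y, rfl⟩ := D.exists_rep
    exact ConnectedComponent.sound (h.preconnected x y)⟩
  exact Nat.card_unique

noncomputable def stepIso (G : SimpleGraph W) (S : Set W) (a : W) (ha : a ∈ Sᶜ) :
    (G.induce Sᶜ).induce ({(⟨a, ha⟩ : ↥Sᶜ)}ᶜ) ≃g G.induce ((insert a S)ᶜ) where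
  toFun x := ⟨x.val.val, by
    intro h
    rcases Set.mem_insert_iff.mp h with h | h
    · exact x.2 (Subtype.ext h)
    · exact x.val.2 h⟩
  invFun y := ⟨⟨y.val, fun h => y.2 (Set.mem_insert_iff.mpr (Or.inr h))⟩,
      fun h => y.2 (Set.mem_insert_iff.mpr (Or.inl (congrArg Subtype.val h)))⟩
  left_inv x := rfl
  right_inv y := rfl
  map_rel_iff' := Iff.rfl

end Aux

/-- Every connected `K_{1,n}`-free simple graph with `n ≥ 3` satisfies
`ω(G \ S) ≤ (n−2)|S| + 1` for all `S ⊆ V(G)`. -/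
theorem stmt_16 {V : Type*} [Fintype V] (G : SimpleGraph V) (n : ℕ) (hn : 3 ≤ n)
    (hconn : G.Connected) (hfree : K1nFree n G) (S : Set V) :
    numComponents (G.induce Sᶜ) ≤ (n - 2) * S.ncard + 1 := by
  classical
  refine Set.Finite.induction_on (motive := fun S _ => numComponents (G.induce Sᶜ) ≤ (n - 2) * S.ncard + 1) S (Set.toFinite S) ?_ ?_
  · rw [Set.compl_empty, numComponents_congr (induceUnivIso G),
      numComponents_of_connected hconn]
    simp
  · intro a s ha hfin ih
    have haS : a ∈ sᶜ := ha
    rw [← numComponents_congr (stepIso G s a haS),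
      Set.ncard_insert_of_notMem ha hfin]
    calc numComponents ((G.induce sᶜ).induce ({(⟨a, haS⟩ : ↥sᶜ)}ᶜ))
        ≤ numComponents (G.induce sᶜ) + (n - 2) :=
          key_step hn (G.induce sᶜ) (hfree.induce _) ⟨a, haS⟩
      _ ≤ ((n - 2) * s.ncard + 1) + (n - 2) := by omega
      _ = (n - 2) * (s.ncard + 1) + 1 := by ring
end
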